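/- One has (f_1^1, f_2^1, f_3^1) = (α, β, γ), and for every integer g ≥ 1 the recursion relations f_1^{g+1} = α·f_1^g + g²·f_2^g, f_2^{g+1} = β·f_1^g + (2g/(g+1))·f_3^g, and f_3^{g+1} = γ·f_1^g hold. -/

import Mathlib

noncomputable section

open PowerSeries

/-- The polynomial ring `ℚ[α,β,γ]`. -/
abbrev R3 : Type := MvPolynomial (Fin 3) ℚ

/-- The fraction field `K = ℚ(α,β,γ)`. -/
abbrev K3 : Type := FractionRing R3

/-- The image of `α` in `K`. -/
def al : K3 := algebraMap R3 K3 (MvPolynomial.X 0)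
/-- The image of `β` in `K`. -/
def be : K3 := algebraMap R3 K3 (MvPolynomial.X 1)
/-- The image of `γ` in `K`. -/
def ga : K3 := algebraMap R3 K3 (MvPolynomial.X 2)

/-- The binomial series `(1 - β t²)^{-1/2} = ∑_{n≥0} C(2n,n) (β t²/4)^n`. -/
def Sq : PowerSeries K3 :=
  PowerSeries.mk fun k => if k % 2 = 0 then
    ((k.choose (k / 2) : ℚ) : K3) * (be / 4) ^ (k / 2) else 0

/-- The exponent `E(t) = α t + (α + 2γ/β) ∑_{m≥1} β^m t^{2m+1}/(2m+1)`;
its coefficient in degree `k = 2m+1 ≥ 3` is `(α + 2γ/β) β^{(k-1)/2} / k`. -/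
def Ex : PowerSeries K3 :=
  PowerSeries.mk fun k =>
    if k = 1 then al
    else if k % 2 = 1 then (al + 2 * ga / be) * be ^ ((k - 1) / 2) / (k : K3)
    else 0

/-- The formal exponential `exp E = ∑_n E^n/n!` of the power series `E`
(which has zero constant term, so each coefficient is a finite sum). -/
def ExpEx : PowerSeries K3 :=
  PowerSeries.mk fun k =>
    ∑ n ∈ Finset.range (k + 1), PowerSeries.coeff (R := K3) k (Ex ^ n) / (n.factorial : K3)

/-- The generating function `Φ(t) = (1 - βt²)^{-1/2} exp(E(t))`. -/
def Phi : PowerSeries K3 := Sq * ExpEx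

/-- `φ_k`, the `k`-th coefficient of `Φ`. -/
def phi (k : ℕ) : K3 := PowerSeries.coeff (R := K3) k Phi

/-- `Φ^{(r)} = r! φ_r`, the `r`-th formal derivative of `Φ` at `t = 0`. -/
def PhiD (r : ℕ) : K3 := (r.factorial : K3) * phi r

/-- `f_1^g := Φ^{(g)}`. -/
def f1 (g : ℕ) : K3 := PhiD g
/-- `f_2^g := (1/g²)(Φ^{(g+1)} - α Φ^{(g)})`. -/
def f2 (g : ℕ) : K3 := (1 / (g : K3) ^ 2) * (PhiD (g + 1) - al * PhiD g)
/-- `f_3^g := (1/(2g(g+1)))(Φ^{(g+2)} - α Φ^{(g+1)} - (g+1)² β Φ^{(g)})`. -/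
def f3 (g : ℕ) : K3 :=
  (1 / (2 * (g : K3) * ((g : K3) + 1))) *
    (PhiD (g + 2) - al * PhiD (g + 1) - ((g : K3) + 1) ^ 2 * be * PhiD g)


/-! ### Auxiliary lemmas -/

lemma be_ne : be ≠ 0 := by
  have h : Function.Injective (algebraMap R3 K3) := IsFractionRing.injective R3 K3
  simp only [be, Ne, map_eq_zero_iff _ h]
  exact MvPolynomial.X_ne_zero 1

lemma coeff_Sq_even (n : ℕ) :
    coeff (R := K3) (2 * n) Sq = (((2 * n).choose n : ℕ) : K3) * (be / 4) ^ n := by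
  have h1 : 2 * n % 2 = 0 := by omega
  have h2 : 2 * n / 2 = n := by omega
  simp only [Sq, coeff_mk, h1, h2, if_true]
  push_cast
  norm_num

lemma coeff_Sq_odd (n : ℕ) : coeff (R := K3) (2 * n + 1) Sq = 0 := by
  have h1 : (2 * n + 1) % 2 = 1 := by omega
  simp [Sq, coeff_mk, h1]

lemma coeff_x2_low (f : PowerSeries K3) (k : ℕ) (h : k < 2) :
    coeff (R := K3) k (X ^ 2 * f) = 0 := by
  rw [PowerSeries.coeff_mul]
  apply Finset.sum_eq_zero
  intro p hp
  rw [Finset.HasAntidiagonal.mem_antidiagonal] at hp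
  rw [PowerSeries.coeff_X_pow]
  have : p.1 ≠ 2 := by omega
  simp [this]

lemma ODE_S : (1 - C (R := K3) be * X ^ 2) * (d⁄dX K3) Sq = C (R := K3) be * (X * Sq) := by
  ext k
  rw [sub_mul, one_mul, map_sub, mul_assoc, coeff_C_mul, coeff_C_mul]
  match k with
  | 0 =>
      have h0 : coeff (R := K3) 0 ((d⁄dX K3) Sq) = 0 := by
        rw [coeff_derivative]
        have := coeff_Sq_odd 0
        norm_num at this ⊢
        exact this
      rw [h0, coeff_x2_low _ 0 (by omega), coeff_zero_X_mul]
      ring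
  | 1 =>
      rw [coeff_x2_low _ 1 (by omega), coeff_succ_X_mul, coeff_derivative]
      have h2 : coeff (R := K3) 2 Sq = be / 2 := by
        have := coeff_Sq_even 1
        norm_num at this ⊢
        rw [this]; ring
      have h0 : coeff (R := K3) 0 Sq = 1 := by
        have := coeff_Sq_even 0
        norm_num at this ⊢
        exact this
      rw [h2, h0]
      push_cast
      ring
  | (k+2) =>
      rw [coeff_X_pow_mul, coeff_derivative, coeff_derivative,
        show k + 2 + 1 = k + 3 from rfl, show k + 2 = k + 1 + 1 from rfl,
        coeff_succ_X_mul]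
      rcases Nat.even_or_odd k with ⟨n, rfl⟩ | ⟨n, rfl⟩
      · have e1 : n + n + 3 = 2 * (n + 1) + 1 := by ring
        have e2 : n + n + 1 = 2 * n + 1 := by ring
        rw [e1, e2, coeff_Sq_odd, coeff_Sq_odd]
        ring
      · have e1 : 2 * n + 1 + 3 = 2 * (n + 2) := by ring
        have e2 : 2 * n + 1 + 1 = 2 * (n + 1) := by ring
        rw [e1, e2, coeff_Sq_even, coeff_Sq_even]
        have key : ((n:K3) + 2) * (((2 * (n+2)).choose (n+2) : ℕ) : K3)
            = 2 * (2 * (n:K3) + 3) * (((2 * (n+1)).choose (n+1) : ℕ) : K3) := by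
          have h' : (n + 2) * ((2*(n+2)).choose (n+2))
              = 2 * (2*(n+1)+1) * ((2*(n+1)).choose (n+1)) := by
            simpa [Nat.centralBinom] using Nat.succ_mul_centralBinom_succ (n+1)
          have := congrArg (fun m : ℕ => (m : K3)) h'
          push_cast at this
          linear_combination this
        push_cast
        linear_combination ((be/4)^(n+1) * be / 2) * key

lemma coeff_Ex_even (n : ℕ) : coeff (R := K3) (2 * n) Ex = 0 := by
  have h1 : 2 * n ≠ 1 := by omega
  have h2 : 2 * n % 2 ≠ 1 := by omega
  simp [Ex, coeff_mk, h1, h2]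

lemma coeff_Ex_one : coeff (R := K3) 1 Ex = al := by simp [Ex, coeff_mk]

lemma coeff_Ex_odd (n : ℕ) :
    coeff (R := K3) (2 * n + 3) Ex = (al + 2 * ga / be) * be ^ (n + 1) / ((2 * n + 3 : ℕ) : K3) := by
  have h1 : 2 * n + 3 ≠ 1 := by omega
  have h2 : (2 * n + 3) % 2 = 1 := by omega
  have h3 : (2 * n + 3 - 1) / 2 = n + 1 := by omega
  simp only [Ex, coeff_mk, h1, if_false, h2, if_true, h3]

lemma ODE_E : (1 - C (R := K3) be * X ^ 2) * (d⁄dX K3) Ex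
    = C (R := K3) al + C (R := K3) (2 * ga) * X ^ 2 := by
  ext k
  rw [sub_mul, one_mul, map_sub, mul_assoc, coeff_C_mul, map_add, coeff_C_mul,
    coeff_C, PowerSeries.coeff_X_pow]
  match k with
  | 0 =>
      rw [coeff_x2_low _ 0 (by omega), coeff_derivative, coeff_Ex_one]
      norm_num
  | 1 =>
      rw [coeff_x2_low _ 1 (by omega), coeff_derivative]
      have := coeff_Ex_even 1
      norm_num at this ⊢
      simp [this]
  | 2 =>
      rw [show (2:ℕ) = 0 + 2 from rfl, coeff_X_pow_mul, coeff_derivative, coeff_derivative]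
      have h3 : coeff (R := K3) 3 Ex = (al + 2 * ga / be) * be / 3 := by
        have := coeff_Ex_odd 0
        norm_num at this
        rw [this]
      rw [h3, coeff_Ex_one]
      push_cast
      linear_combination div_mul_cancel₀ (2 * ga) be_ne
  | (k+3) =>
      rw [show k + 3 = k + 1 + 2 from rfl, coeff_X_pow_mul, coeff_derivative, coeff_derivative]
      have hne : k + 1 + 2 ≠ 0 := by omega
      have hne2 : k + 1 + 2 ≠ 2 := by omega
      rw [if_neg hne, if_neg hne2]
      rcases Nat.even_or_odd k with ⟨n, rfl⟩ | ⟨n, rfl⟩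
      · have e1 : n + n + 2 + 2 = 2 * (n + 2) := by ring
        have e2 : n + n + 1 + 1 = 2 * (n + 1) := by ring
        rw [e1, e2, coeff_Ex_even, coeff_Ex_even]
        ring
      · have e1 : 2 * n + 1 + 2 + 2 = 2 * (n + 1) + 3 := by ring
        have e2 : 2 * n + 1 + 1 + 1 = 2 * n + 3 := by ring
        rw [e1, e2, coeff_Ex_odd, coeff_Ex_odd]
        have c1 : ((2 * (n + 1) + 3 : ℕ) : K3) ≠ 0 := Nat.cast_ne_zero.mpr (by omega)
        have c2 : ((2 * n + 3 : ℕ) : K3) ≠ 0 := Nat.cast_ne_zero.mpr (by omega)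
        push_cast at c1 c2 ⊢
        field_simp
        ring

lemma coeff_Ex_zero : coeff (R := K3) 0 Ex = 0 := by simp [Ex, coeff_mk]

lemma coeff_Ex_pow_zero : ∀ m n : ℕ, n < m → coeff (R := K3) n (Ex ^ m) = 0 := by
  intro m
  induction m with
  | zero => intro n h; omega
  | succ m ih =>
      intro n h
      rw [pow_succ, PowerSeries.coeff_mul]
      apply Finset.sum_eq_zero
      intro p hp
      rw [Finset.HasAntidiagonal.mem_antidiagonal] at hp
      by_cases hc : p.1 < m
      · rw [ih p.1 hc, zero_mul]
      · have : p.2 = 0 := by omega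
        rw [this, coeff_Ex_zero, mul_zero]

lemma coeff_ExpEx_trunc (k N : ℕ) (h : k ≤ N) :
    coeff (R := K3) k ExpEx = ∑ n ∈ Finset.range (N + 1), coeff (R := K3) k (Ex ^ n) / (n.factorial : K3) := by
  rw [ExpEx, coeff_mk]
  apply Finset.sum_subset
  · exact Finset.range_subset_range.mpr (by omega)
  · intro n hn hnk
    rw [Finset.mem_range] at hn
    rw [Finset.mem_range, not_lt] at hnk
    rw [coeff_Ex_pow_zero n k (by omega), zero_div]

lemma ODE_P : (d⁄dX K3) ExpEx = (d⁄dX K3) Ex * ExpEx := by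
  ext k
  have key : ∀ m : ℕ, coeff (R := K3) (k + 1) (Ex ^ (m + 1)) / ((m + 1).factorial : K3) * (k + 1)
      = coeff (R := K3) k (Ex ^ m * (d⁄dX K3) Ex) / (m.factorial : K3) := by
    intro m
    have h1 : (d⁄dX K3) (Ex ^ (m + 1)) = (m + 1) • Ex ^ m • (d⁄dX K3) Ex := by
      simpa only [Nat.add_sub_cancel] using Derivation.leibniz_pow (d⁄dX K3) (a := Ex) (m + 1)
    have h2 : coeff (R := K3) (k + 1) (Ex ^ (m + 1)) * (k + 1)
        = ((m : K3) + 1) * coeff (R := K3) k (Ex ^ m * (d⁄dX K3) Ex) := by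
      rw [← coeff_derivative, h1]
      simp only [smul_eq_mul, map_nsmul, nsmul_eq_mul]
      push_cast
      simp only [map_add, mul_assoc, ← map_natCast (C (R := K3)) m, coeff_C_mul]
      rw [← map_one (C (R := K3)), ← map_add, coeff_C_mul]
    have hm : ((m : K3) + 1) ≠ 0 := by
      have : (((m + 1 : ℕ)) : K3) ≠ 0 := Nat.cast_ne_zero.mpr (by omega)
      push_cast at this; exact this
    rw [div_mul_eq_mul_div, h2, Nat.factorial_succ]
    push_cast
    rw [mul_comm ((m:K3)+1) (m.factorial : K3)]
    rw [← div_div, mul_div_assoc]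
    rw [mul_div_cancel_left₀ _ hm]
  have lhs_eq : coeff (R := K3) k ((d⁄dX K3) ExpEx)
      = ∑ m ∈ Finset.range (k + 1), coeff (R := K3) k (Ex ^ m * (d⁄dX K3) Ex) / (m.factorial : K3) := by
    rw [coeff_derivative, ExpEx, coeff_mk, Finset.sum_mul, Finset.sum_range_succ']
    have h0 : coeff (R := K3) (k + 1) (Ex ^ 0) / ((0:ℕ).factorial : K3) * (k + 1) = 0 := by
      simp [PowerSeries.coeff_one]
    rw [h0, add_zero]
    exact Finset.sum_congr rfl fun m _ => key m
  have rhs_eq : coeff (R := K3) k ((d⁄dX K3) Ex * ExpEx)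
      = ∑ m ∈ Finset.range (k + 1), coeff (R := K3) k (Ex ^ m * (d⁄dX K3) Ex) / (m.factorial : K3) := by
    rw [PowerSeries.coeff_mul]
    have step : ∀ p ∈ Finset.HasAntidiagonal.antidiagonal k,
        coeff (R := K3) p.1 ((d⁄dX K3) Ex) * coeff (R := K3) p.2 ExpEx
        = ∑ m ∈ Finset.range (k + 1),
            coeff (R := K3) p.1 ((d⁄dX K3) Ex) * coeff (R := K3) p.2 (Ex ^ m) / (m.factorial : K3) := by
      intro p hp
      rw [Finset.HasAntidiagonal.mem_antidiagonal] at hp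
      rw [coeff_ExpEx_trunc p.2 k (by omega), Finset.mul_sum]
      exact Finset.sum_congr rfl fun m _ => by rw [mul_div_assoc]
    rw [Finset.sum_congr rfl step, Finset.sum_comm]
    refine Finset.sum_congr rfl fun m _ => ?_
    rw [mul_comm (Ex ^ m), PowerSeries.coeff_mul, Finset.sum_div]
  rw [lhs_eq, rhs_eq]

lemma ODE_Phi : (1 - C (R := K3) be * X ^ 2) * (d⁄dX K3) Phi
    = (C (R := K3) al + C (R := K3) be * X + C (R := K3) (2 * ga) * X ^ 2) * Phi := by
  have h : (d⁄dX K3) Phi = (d⁄dX K3) Sq * ExpEx + Sq * ((d⁄dX K3) Ex * ExpEx) := by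
    rw [Phi, Derivation.leibniz, ODE_P, smul_eq_mul, smul_eq_mul]
    ring
  rw [h, Phi]
  linear_combination ExpEx * ODE_S + (Sq * ExpEx) * ODE_E

lemma coeff_Sq_zero : coeff (R := K3) 0 Sq = 1 := by
  have := coeff_Sq_even 0
  norm_num at this ⊢
  exact this

lemma coeff_ExpEx_zero : coeff (R := K3) 0 ExpEx = 1 := by
  simp [ExpEx, coeff_mk]

lemma phi_zero : phi 0 = 1 := by
  rw [phi, Phi, PowerSeries.coeff_mul]
  simp [coeff_Sq_zero, coeff_ExpEx_zero]

lemma coeff_x2 (f : PowerSeries K3) (k : ℕ) :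
    coeff (R := K3) (k + 2) (X ^ 2 * f) = coeff (R := K3) k f := coeff_X_pow_mul f 2 k

lemma rec0 : phi 1 = al * phi 0 := by
  have h := congrArg (coeff (R := K3) 0) ODE_Phi
  simp only [sub_mul, add_mul, one_mul, map_sub, map_add, mul_assoc, coeff_C_mul] at h
  rw [coeff_x2_low _ 0 (by omega), coeff_x2_low _ 0 (by omega), coeff_zero_X_mul,
    coeff_derivative] at h
  simpa [phi] using h

lemma rec1 : 2 * phi 2 = al * phi 1 + be * phi 0 := by
  have h := congrArg (coeff (R := K3) 1) ODE_Phi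
  simp only [sub_mul, add_mul, one_mul, map_sub, map_add, mul_assoc, coeff_C_mul] at h
  rw [coeff_x2_low _ 1 (by omega), coeff_x2_low _ 1 (by omega),
    show coeff (R := K3) 1 (X * Phi) = coeff (R := K3) 0 Phi from coeff_succ_X_mul 0 Phi, coeff_derivative] at h
  simp only [phi] at *
  push_cast at h
  linear_combination h

lemma rec_main (k : ℕ) : ((k : K3) + 3) * phi (k + 3)
    = al * phi (k + 2) + ((k : K3) + 2) * be * phi (k + 1) + 2 * ga * phi k := by
  have h := congrArg (coeff (R := K3) (k + 2)) ODE_Phi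
  simp only [sub_mul, add_mul, one_mul, map_sub, map_add, mul_assoc, coeff_C_mul] at h
  rw [coeff_x2 _ k, coeff_x2 _ k, show k + 2 = k + 1 + 1 from rfl, coeff_succ_X_mul,
    coeff_derivative, coeff_derivative] at h
  simp only [phi] at *
  push_cast at h
  linear_combination h

/-- `(f_1^1, f_2^1, f_3^1) = (α, β, γ)` and for every `g ≥ 1` the recursions
`f_1^{g+1} = α f_1^g + g² f_2^g`, `f_2^{g+1} = β f_1^g + (2g/(g+1)) f_3^g`,
`f_3^{g+1} = γ f_1^g` hold. -/
theorem statement3 :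
    (f1 1 = al ∧ f2 1 = be ∧ f3 1 = ga) ∧
    ∀ g : ℕ, 1 ≤ g →
      f1 (g + 1) = al * f1 g + (g : K3) ^ 2 * f2 g ∧
      f2 (g + 1) = be * f1 g + (2 * (g : K3) / ((g : K3) + 1)) * f3 g ∧
      f3 (g + 1) = ga * f1 g := by
  
  have h3 := rec_main 0
  norm_num at h3
  constructor
  · refine ⟨?_, ?_, ?_⟩
    · simp only [f1, PhiD, Nat.factorial]
      rw [rec0, phi_zero]
      push_cast
      ring
    · simp only [f2, PhiD, Nat.factorial]
      push_cast
      have r1 := rec1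
      rw [phi_zero] at r1
      linear_combination r1
    · simp only [f3, PhiD, Nat.factorial]
      push_cast
      rw [phi_zero] at h3
      have h4 : (4 : K3) ≠ 0 := by norm_num
      field_simp
      linear_combination 2 * h3
  · intro g hg
    have hG : (g : K3) ≠ 0 := Nat.cast_ne_zero.mpr (by omega)
    have hG1 : ((g : K3) + 1) ≠ 0 := by
      have : ((g + 1 : ℕ) : K3) ≠ 0 := Nat.cast_ne_zero.mpr (by omega)
      push_cast at this; exact this
    have hG2 : ((g : K3) + 2) ≠ 0 := by
      have : ((g + 2 : ℕ) : K3) ≠ 0 := Nat.cast_ne_zero.mpr (by omega)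
      push_cast at this; exact this
    refine ⟨?_, ?_, ?_⟩
    · simp only [f1, f2]
      field_simp
      ring
    · simp only [f1, f2, f3]
      push_cast
      field_simp
      ring
    · simp only [f1, f3]
      have hrec := rec_main g
      simp only [PhiD] at *
      rw [show g + 1 + 2 = g + 3 from rfl, show g + 1 + 1 = g + 2 from rfl,
        show (g+3).factorial = (g+3)*(g+2).factorial from rfl,
        show (g+2).factorial = (g+2)*(g+1).factorial from rfl,
        show (g+1).factorial = (g+1)*(g).factorial from rfl]
      have hF : ((g.factorial : ℕ) : K3) ≠ 0 := Nat.cast_ne_zero.mpr g.factorial_ne_zero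
      push_cast
      have hne : 2 * ((g:K3)+1) * (((g:K3)+1) + 1) ≠ 0 := by
        apply mul_ne_zero (mul_ne_zero two_ne_zero hG1)
        have : ((g : K3) + 1) + 1 = (g : K3) + 2 := by ring
        rw [this]; exact hG2
      rw [one_div, inv_mul_eq_div, div_eq_iff hne]
      linear_combination (((g:K3)+1) * ((g:K3)+2) * ((g.factorial : ℕ) : K3)) * hrec
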